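/- Suppose A₁,…,A_k are n×n matrices, R is an n×m matrix whose conical hull K_R(R) is a proper cone, and for each i there exist α_i ∈ ℝ and entrywise positive P_i with (α_i I + A_i)R = R P_i. If J is any matrix in the conical hull of {A₁,…,A_k} other than 0, then J satisfies the strict sub-tangentiality condition with respect to K_R(R): for all nonzero δx ∈ K_R(R) and nonzero h ∈ K_R(R)* with ⟨h, δx⟩ = 0, one has ⟨h, J δx⟩ > 0. -/

import Mathlib

/-!
Write `δx = R p` with `p ≥ 0`, `p ≠ 0`. Since `Pᵢ > 0`, the vector `Pᵢ p` is entrywise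
positive, and the intertwining relation gives
`⟨h, Aᵢ δx⟩ = ⟨h, R (Pᵢ p)⟩ - αᵢ ⟨h, δx⟩ = ⟨h, R (Pᵢ p)⟩`.
The row vector `hᵀR` pairs `h` with the generators of the cone, so it is nonnegative, and it is
nonzero because a nonzero element of the dual cone is strictly positive on the interior of the
cone. Hence `⟨h, R q⟩ = hᵀR q > 0` for every positive `q`, and a nonzero nonnegative
combination of the positive numbers `⟨h, Aᵢ δx⟩` is positive.
-/

open Matrix

/-- A (convex) cone: closed under addition and nonnegative scaling. -/
def IsConvexCone {n : ℕ} (K : Set (Fin n → ℝ)) : Prop :=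
  (∀ x ∈ K, ∀ y ∈ K, x + y ∈ K) ∧ (∀ x ∈ K, ∀ c : ℝ, 0 ≤ c → c • x ∈ K)

/-- A proper cone: closed convex cone with nonempty interior, pointed. -/
def IsProperCone {n : ℕ} (K : Set (Fin n → ℝ)) : Prop :=
  IsConvexCone K ∧ IsClosed K ∧ (interior K).Nonempty ∧ ∀ x ∈ K, -x ∈ K → x = 0

/-- The dual cone. -/
def dualCone {n : ℕ} (K : Set (Fin n → ℝ)) : Set (Fin n → ℝ) :=
  {h | ∀ r ∈ K, 0 ≤ h ⬝ᵥ r}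

/-- The conical hull of the columns of a matrix (R-representation). -/
def coneOf {n m : ℕ} (R : Matrix (Fin n) (Fin m) ℝ) : Set (Fin n → ℝ) :=
  {x | ∃ p : Fin m → ℝ, (∀ j, 0 ≤ p j) ∧ x = R *ᵥ p}

open Filter Topology

lemma dotProduct_pos_of_nonneg_of_pos {ι R : Type*} [Fintype ι] [Semiring R] [PartialOrder R]
    [IsStrictOrderedRing R] {u v : ι → R} (hu : 0 ≤ u) (hu0 : u ≠ 0) (hv : ∀ i, 0 < v i) :
    0 < u ⬝ᵥ v := by
  obtain ⟨-, i, hi⟩ := Pi.lt_def.mp (hu.lt_of_ne' hu0)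
  exact Finset.sum_pos' (fun j _ => mul_nonneg (hu j) (hv j).le)
    ⟨i, Finset.mem_univ i, mul_pos hi (hv i)⟩

lemma mulVec_pos_of_pos_of_nonneg {ι κ R : Type*} [Fintype κ] [CommSemiring R] [PartialOrder R]
    [IsStrictOrderedRing R] {P : Matrix ι κ R} (hP : ∀ a b, 0 < P a b) {p : κ → R}
    (hp : 0 ≤ p) (hp0 : p ≠ 0) (a : ι) : 0 < (P *ᵥ p) a := by
  rw [mulVec, dotProduct_comm]
  exact dotProduct_pos_of_nonneg_of_pos hp hp0 (hP a)

lemma mulVec_mulVec_eq_of_mul_eq {ι κ R : Type*} [Fintype ι] [Fintype κ] [DecidableEq ι]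
    [CommRing R] {A : Matrix ι ι R} {M : Matrix ι κ R} {P : Matrix κ κ R} {α : R}
    (heq : (α • 1 + A) * M = M * P) (p : κ → R) :
    A *ᵥ (M *ᵥ p) = M *ᵥ (P *ᵥ p) - α • M *ᵥ p := by
  have := congrArg (· *ᵥ p) heq
  simp only [Matrix.add_mul, add_mulVec, Matrix.smul_mul, Matrix.one_mul, smul_mulVec,
    ← mulVec_mulVec] at this
  rw [← this, add_sub_cancel_left]

lemma dotProduct_pos_of_mem_interior {n : ℕ} {K : Set (Fin n → ℝ)} {h z : Fin n → ℝ}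
    (hh : h ∈ dualCone K) (hh0 : h ≠ 0) (hz : z ∈ interior K) : 0 < h ⬝ᵥ z := by
  -- `z - t • h ∈ K` for small `t > 0`; pairing it with `h` gives `h ⬝ᵥ z ≥ t (h ⬝ᵥ h)`.
  have hnear : ∀ᶠ t in 𝓝[>] (0 : ℝ), z - t • h ∈ K := by
    have hlim : Tendsto (fun t : ℝ => z - t • h) (𝓝 0) (𝓝 z) := by
      have hcont : Continuous fun t : ℝ => z - t • h := by fun_prop
      simpa using hcont.tendsto 0
    exact (hlim.eventually (mem_interior_iff_mem_nhds.mp hz)).filter_mono nhdsWithin_le_nhds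
  obtain ⟨t, htK, ht⟩ := (hnear.and self_mem_nhdsWithin).exists
  have hhh : 0 < h ⬝ᵥ h := by simpa using dotProduct_star_self_pos_iff.mpr hh0
  have hpair := hh _ htK
  rw [dotProduct_sub, dotProduct_smul, smul_eq_mul] at hpair
  linarith [mul_pos (Set.mem_Ioi.mp ht) hhh]

section coneOf

variable {n m : ℕ} {R : Matrix (Fin n) (Fin m) ℝ} {h : Fin n → ℝ}

lemma vecMul_nonneg_of_mem_dualCone (hh : h ∈ dualCone (coneOf R)) : 0 ≤ h ᵥ* R := by
  intro j
  have hsingle : (0 : Fin m → ℝ) ≤ Pi.single j 1 := Pi.single_nonneg.mpr zero_le_one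
  have hcol := hh (R *ᵥ Pi.single j 1) ⟨Pi.single j 1, hsingle, rfl⟩
  rwa [dotProduct_mulVec, dotProduct_single_one] at hcol

lemma vecMul_ne_zero_of_mem_dualCone (hint : (interior (coneOf R)).Nonempty)
    (hh : h ∈ dualCone (coneOf R)) (hh0 : h ≠ 0) : h ᵥ* R ≠ 0 := by
  intro hR
  obtain ⟨z, hz⟩ := hint
  have hpos := dotProduct_pos_of_mem_interior hh hh0 hz
  obtain ⟨p, -, rfl⟩ := interior_subset hz
  rw [dotProduct_mulVec, hR, zero_dotProduct] at hpos
  exact hpos.false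

lemma dotProduct_mulVec_pos_of_mem_dualCone (hint : (interior (coneOf R)).Nonempty)
    (hh : h ∈ dualCone (coneOf R)) (hh0 : h ≠ 0) {q : Fin m → ℝ} (hq : ∀ j, 0 < q j) :
    0 < h ⬝ᵥ R *ᵥ q := by
  rw [dotProduct_mulVec]
  exact dotProduct_pos_of_nonneg_of_pos (vecMul_nonneg_of_mem_dualCone hh)
    (vecMul_ne_zero_of_mem_dualCone hint hh hh0) hq

lemma dotProduct_mulVec_pos_of_mul_eq (hint : (interior (coneOf R)).Nonempty)
    {A : Matrix (Fin n) (Fin n) ℝ} {P : Matrix (Fin m) (Fin m) ℝ} {α : ℝ}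
    (hP : ∀ a b, 0 < P a b) (heq : (α • 1 + A) * R = R * P)
    {δx : Fin n → ℝ} (hδx : δx ∈ coneOf R) (hδ0 : δx ≠ 0)
    (hh : h ∈ dualCone (coneOf R)) (hh0 : h ≠ 0) (hortho : h ⬝ᵥ δx = 0) :
    0 < h ⬝ᵥ (A *ᵥ δx) := by
  obtain ⟨p, hp, rfl⟩ := hδx
  have hp0 : p ≠ 0 := by
    rintro rfl
    exact hδ0 (mulVec_zero R)
  rw [mulVec_mulVec_eq_of_mul_eq heq, dotProduct_sub, dotProduct_smul, hortho, smul_zero,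
    sub_zero]
  exact dotProduct_mulVec_pos_of_mem_dualCone hint hh hh0 (mulVec_pos_of_pos_of_nonneg hP hp hp0)

end coneOf

/-- If K_R(R) is proper and each generator Aᵢ of a conical relaxation passes the
LP test (αᵢI + Aᵢ)R = RPᵢ with Pᵢ > 0, then every nonzero element J of the conical
hull of the Aᵢ satisfies strict sub-tangentiality with respect to K_R(R). -/
theorem stmt6 {n m k : ℕ} (A : Fin k → Matrix (Fin n) (Fin n) ℝ)
    (R : Matrix (Fin n) (Fin m) ℝ)
    (hproper : IsProperCone (coneOf R))
    (α : Fin k → ℝ) (P : Fin k → Matrix (Fin m) (Fin m) ℝ)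
    (hP : ∀ i, ∀ a b, 0 < P i a b)
    (heq : ∀ i, (α i • (1 : Matrix (Fin n) (Fin n) ℝ) + A i) * R = R * P i)
    (J : Matrix (Fin n) (Fin n) ℝ) (hJ0 : J ≠ 0)
    (hJ : ∃ p : Fin k → ℝ, (∀ i, 0 ≤ p i) ∧ J = ∑ i, p i • A i) :
    ∀ δx ∈ coneOf R, δx ≠ 0 → ∀ h ∈ dualCone (coneOf R), h ≠ 0 →
      h ⬝ᵥ δx = 0 → 0 < h ⬝ᵥ (J *ᵥ δx) := by
  intro δx hδx hδ0 h hh hh0 hortho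
  obtain ⟨c, hc, rfl⟩ := hJ
  have hc0 : c ≠ 0 := by
    rintro rfl
    simp at hJ0
  have hterm (i : Fin k) : 0 < h ⬝ᵥ (A i *ᵥ δx) :=
    dotProduct_mulVec_pos_of_mul_eq hproper.2.2.1 (hP i) (heq i) hδx hδ0 hh hh0 hortho
  calc 0 < c ⬝ᵥ fun i => h ⬝ᵥ (A i *ᵥ δx) := dotProduct_pos_of_nonneg_of_pos hc hc0 hterm
    _ = h ⬝ᵥ ((∑ i, c i • A i) *ᵥ δx) := by
      simp only [sum_mulVec, dotProduct_sum, smul_mulVec, dotProduct_smul, smul_eq_mul]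
      rfl
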